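/- arXiv:2410.13558 — 2 statements merged into one kernel-verified Lean document; each statement's English description precedes it below -/
import Mathlib

section
/- Let h_1, ..., h_n be real analytic (or n-1 times continuously differentiable) functions on a neighborhood of a point x. Then the limit, as x_1, ..., x_n all tend to x, of det(h_j(x_i))_{i,j=1}^n divided by the Vandermonde determinant ∏_{1≤i<j≤n}(x_i - x_j) equals (-1)^{n(n-1)/2} / (1! 2! ⋯ (n-1)!) times the Wronskian determinant det(h_j^{(i-1)}(x))_{i,j=1}^n. -/
open Filter Matrix

/-- The divided difference of `f` over a finite set of points. -/
noncomputable def dd (f : ℝ → ℝ) (t : Finset ℝ) : ℝ :=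
  ∑ a ∈ t, f a * (∏ b ∈ t.erase a, (a - b))⁻¹

lemma poly_contDiff (p : Polynomial ℝ) : ContDiff ℝ (⊤ : ℕ∞) (fun x : ℝ => p.eval x) := by
  induction p using Polynomial.induction_on' with
  | add p q hp hq => simpa [Polynomial.eval_add] using hp.add hq
  | monomial n a =>
      simpa [Polynomial.eval_monomial] using (contDiff_const (c := a)).mul (contDiff_id.pow n)

lemma iter_rolle : ∀ (k : ℕ) (g : ℝ → ℝ), ContDiff ℝ (⊤ : ℕ∞) g → ∀ (t : Finset ℝ)
    (_ : t.card = k + 1) (hne : t.Nonempty), (∀ a ∈ t, g a = 0) →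
    ∃ ξ ∈ Set.Icc (t.min' hne) (t.max' hne), iteratedDeriv k g ξ = 0 := by
  intro k
  induction k with
  | zero =>
      intro g hg t htc hne h0
      exact ⟨t.min' hne, ⟨le_refl _, t.min'_le _ (t.max'_mem hne)⟩, by
        simpa [iteratedDeriv_zero] using h0 _ (t.min'_mem hne)⟩
  | succ k ih =>
      intro g hg t htc hne h0
      set m : Fin (k + 2) → ℝ := fun i => ((t.orderIsoOfFin htc i : ℝ)) with hm
      have hmono : StrictMono m := fun i j hij => by
        simpa [hm] using (t.orderIsoOfFin htc).strictMono hij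
      have hmem : ∀ i, m i ∈ t := fun i => (t.orderIsoOfFin htc i).2
      have key : ∀ i : Fin (k + 1), ∃ c ∈ Set.Ioo (m i.castSucc) (m i.succ), deriv g c = 0 := by
        intro i
        exact exists_deriv_eq_zero (hmono (Fin.castSucc_lt_succ : i.castSucc < i.succ))
          (hg.continuous.continuousOn)
          (by rw [h0 _ (hmem _), h0 _ (hmem _)])
      choose q hq1 hq2 using key
      have hqmono : StrictMono q := by
        intro i j hij
        calc q i < m i.succ := (hq1 i).2
        _ ≤ m j.castSucc := hmono.monotone (Fin.succ_le_castSucc_iff.mpr hij)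
        _ < q j := (hq1 j).1
      set t' : Finset ℝ := Finset.image q Finset.univ with ht'
      have ht'c : t'.card = k + 1 := by
        rw [ht', Finset.card_image_of_injective _ hqmono.injective, Finset.card_univ,
          Fintype.card_fin]
      have ht'ne : t'.Nonempty := Finset.card_pos.mp (by omega)
      have hg' : ContDiff ℝ (⊤ : ℕ∞) (deriv g) := (contDiff_infty_iff_deriv.mp hg).2
      obtain ⟨ξ, hξ, hξ0⟩ := ih (deriv g) hg' t' ht'c ht'ne (by
        rintro a ha
        rw [ht', Finset.mem_image] at ha
        obtain ⟨i, -, rfl⟩ := ha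
        exact hq2 i)
      have hsub : ∀ a ∈ t', t.min' hne ≤ a ∧ a ≤ t.max' hne := by
        rintro a ha
        rw [ht', Finset.mem_image] at ha
        obtain ⟨i, -, rfl⟩ := ha
        constructor
        · exact (t.min'_le _ (hmem i.castSucc)).trans (hq1 i).1.le
        · exact (hq1 i).2.le.trans (t.le_max' _ (hmem i.succ))
      refine ⟨ξ, ⟨?_, ?_⟩, by rwa [iteratedDeriv_succ']⟩
      · exact (hsub _ (t'.min'_mem ht'ne)).1.trans hξ.1
      · exact hξ.2.trans (hsub _ (t'.max'_mem ht'ne)).2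

lemma coeff_lagrange_basis (t : Finset ℝ) (a : ℝ) (ha : a ∈ t) :
    (Lagrange.basis t id a).coeff (t.card - 1) = (∏ b ∈ t.erase a, (a - b))⁻¹ := by
  have hinj : Set.InjOn (id : ℝ → ℝ) t := Function.injective_id.injOn
  have hnd : (Lagrange.basis t id a).natDegree = t.card - 1 :=
    Lagrange.natDegree_basis hinj ha
  rw [← hnd, Polynomial.coeff_natDegree]
  unfold Lagrange.basis
  rw [Polynomial.leadingCoeff_prod]
  rw [← Finset.prod_inv_distrib]
  refine Finset.prod_congr rfl fun b hb => ?_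
  unfold Lagrange.basisDivisor
  rw [Polynomial.leadingCoeff_mul, Polynomial.leadingCoeff_C,
    (Polynomial.monic_X_sub_C _).leadingCoeff, mul_one]
  rfl

lemma dd_eq_coeff (f : ℝ → ℝ) (t : Finset ℝ) :
    dd f t = (Lagrange.interpolate t id f).coeff (t.card - 1) := by
  rw [Lagrange.interpolate_apply, Polynomial.finset_sum_coeff]
  refine Finset.sum_congr rfl fun a ha => ?_
  rw [Polynomial.coeff_C_mul, coeff_lagrange_basis t a ha]

lemma iteratedDeriv_sub' (k : ℕ) (f1 f2 : ℝ → ℝ) (h1 : ContDiff ℝ (⊤ : ℕ∞) f1)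
    (h2 : ContDiff ℝ (⊤ : ℕ∞) f2) :
    iteratedDeriv k (fun y => f1 y - f2 y) =
      fun y => iteratedDeriv k f1 y - iteratedDeriv k f2 y := by
  induction k generalizing f1 f2 with
  | zero => simp [iteratedDeriv_zero]
  | succ k ih =>
      rw [iteratedDeriv_succ', iteratedDeriv_succ' (f := f1), iteratedDeriv_succ' (f := f2)]
      have : deriv (fun y => f1 y - f2 y) = fun y => deriv f1 y - deriv f2 y := by
        funext y
        exact deriv_fun_sub (h1.differentiable (by simp) _)
          (h2.differentiable (by simp) _)
      rw [this, ih _ _ (contDiff_infty_iff_deriv.mp h1).2 (contDiff_infty_iff_deriv.mp h2).2]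

lemma iteratedDeriv_polyeval (k : ℕ) (p : Polynomial ℝ) :
    iteratedDeriv k (fun y => p.eval y) =
      fun y => (Polynomial.derivative^[k] p).eval y := by
  induction k generalizing p with
  | zero => simp [iteratedDeriv_zero]
  | succ k ih =>
      rw [iteratedDeriv_succ']
      have : deriv (fun y => p.eval y) = fun y => (Polynomial.derivative p).eval y := by
        funext y; exact Polynomial.deriv (p := p)
      rw [this, ih (Polynomial.derivative p), Function.iterate_succ_apply]

lemma dd_mvt (f : ℝ → ℝ) (hf : ContDiff ℝ (⊤ : ℕ∞) f) (t : Finset ℝ) (k : ℕ)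
    (htc : t.card = k + 1) (hne : t.Nonempty) :
    ∃ ξ ∈ Set.Icc (t.min' hne) (t.max' hne),
      dd f t = iteratedDeriv k f ξ / (k.factorial : ℝ) := by
  set p := Lagrange.interpolate t id f with hp
  have hinj : Set.InjOn (id : ℝ → ℝ) t := Function.injective_id.injOn
  have hzero : ∀ a ∈ t, f a - p.eval a = 0 := by
    intro a ha
    have := Lagrange.eval_interpolate_at_node f hinj ha
    simp only [id_eq] at this
    rw [← hp] at this
    rw [this]; ring
  obtain ⟨ξ, hξmem, hξ⟩ := iter_rolle k (fun y => f y - p.eval y)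
    (hf.sub (poly_contDiff p)) t htc hne hzero
  rw [iteratedDeriv_sub' k f _ hf (poly_contDiff p), sub_eq_zero] at hξ
  have hdeg : p.natDegree ≤ k := by
    rcases eq_or_ne p 0 with h0 | h0
    · simp [h0]
    · have := Lagrange.degree_interpolate_lt f hinj
      rw [← hp, htc] at this
      exact Nat.lt_succ_iff.mp ((Polynomial.natDegree_lt_iff_degree_lt h0).mpr this)
  have hconst : Polynomial.derivative^[k] p =
      Polynomial.C ((k.factorial : ℝ) * p.coeff k) := by
    have h1 : (Polynomial.derivative^[k] p).natDegree = 0 := by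
      have := Polynomial.natDegree_iterate_derivative p k
      omega
    have h2 := Polynomial.eq_C_of_natDegree_eq_zero h1
    rw [h2, Polynomial.coeff_iterate_derivative, zero_add, Nat.descFactorial_self,
      nsmul_eq_mul]
  rw [iteratedDeriv_polyeval] at hξ
  simp only [hconst, Polynomial.eval_C] at hξ
  refine ⟨ξ, hξmem, ?_⟩
  have hk : (k.factorial : ℝ) ≠ 0 := Nat.cast_ne_zero.mpr k.factorial_ne_zero
  rw [hξ, dd_eq_coeff, htc]
  simp only [Nat.add_sub_cancel, hp]
  field_simp

lemma Iic_filter {n : ℕ} (i : Fin n) :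
    Finset.univ.filter (fun l => l ≤ i) = Finset.Iic i := by
  ext l; simp

lemma Iic_erase {n : ℕ} (i : Fin n) : (Finset.Iic i).erase i = Finset.Iio i := by
  ext a
  simp only [Finset.mem_erase, Finset.mem_Iic, Finset.mem_Iio]
  constructor
  · rintro ⟨hne, hle⟩; exact lt_of_le_of_ne hle hne
  · intro hlt; exact ⟨ne_of_lt hlt, le_of_lt hlt⟩

lemma det_alternant (n : ℕ) (h : Fin n → ℝ → ℝ) (y : Fin n → ℝ) (hy : Function.Injective y) :
    Matrix.det (Matrix.of fun i j : Fin n => h j (y i)) =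
      (∏ i : Fin n, ∏ m ∈ Finset.Iio i, (y i - y m)) *
        Matrix.det (Matrix.of fun i j : Fin n => dd (h j) ((Finset.Iic i).image y)) := by
  classical
  set V := Matrix.of fun i j : Fin n => h j (y i) with hV
  set C := Matrix.of (fun i l : Fin n =>
    if l ≤ i then (∏ m ∈ (Finset.Iic i).erase l, (y l - y m))⁻¹ else 0) with hC
  have hCV : Matrix.of (fun i j : Fin n => dd (h j) ((Finset.Iic i).image y)) = C * V := by
    ext i j
    rw [Matrix.mul_apply]
    simp only [Matrix.of_apply, hC, hV, dd]
    rw [Finset.sum_image (fun a _ b _ hab => hy hab)]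
    simp only [ite_mul, zero_mul]
    rw [← Finset.sum_filter, Iic_filter]
    refine Finset.sum_congr rfl fun l hl => ?_
    rw [← Finset.image_erase hy, Finset.prod_image (fun a _ b _ hab => hy hab)]
    ring
  have htri : C.BlockTriangular OrderDual.toDual := by
    intro i l hlt
    simp only [OrderDual.toDual_lt_toDual] at hlt
    simp [hC, not_le.mpr hlt]
  have hdetC : C.det = (∏ i : Fin n, ∏ m ∈ Finset.Iio i, (y i - y m))⁻¹ := by
    rw [Matrix.det_of_lowerTriangular C htri, ← Finset.prod_inv_distrib]
    refine Finset.prod_congr rfl fun i _ => ?_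
    simp [hC, Iic_erase]
  have hP : (∏ i : Fin n, ∏ m ∈ Finset.Iio i, (y i - y m)) ≠ 0 := by
    refine Finset.prod_ne_zero_iff.mpr fun i _ => Finset.prod_ne_zero_iff.mpr fun m hm => ?_
    exact sub_ne_zero.mpr fun hc => (ne_of_lt (Finset.mem_Iio.mp hm)) (hy hc.symm)
  rw [hCV, Matrix.det_mul, hdetC]
  field_simp

lemma prod_pairs (n : ℕ) (g : Fin n → Fin n → ℝ) :
    ∏ p ∈ Finset.univ.filter (fun p : Fin n × Fin n => p.1 < p.2), g p.1 p.2 =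
      ∏ i : Fin n, ∏ m ∈ Finset.Iio i, g m i := by
  rw [Finset.prod_sigma' Finset.univ (fun i => Finset.Iio i) (fun i m => g m i)]
  refine Finset.prod_nbij' (fun p => ⟨p.2, p.1⟩) (fun x => (x.2, x.1)) ?_ ?_ ?_ ?_ ?_
  · intro p hp
    simp only [Finset.mem_filter, Finset.mem_univ, true_and] at hp
    simp [Finset.mem_sigma, Finset.mem_Iio, hp]
  · intro x hx
    simp only [Finset.mem_sigma, Finset.mem_univ, true_and, Finset.mem_Iio] at hx
    simp [hx]
  · intro p _; rfl
  · intro x _; rfl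
  · intro p _; rfl

lemma prod_pairs_sign (n : ℕ) (y : Fin n → ℝ) :
    ∏ p ∈ Finset.univ.filter (fun p : Fin n × Fin n => p.1 < p.2), (y p.1 - y p.2) =
      (-1 : ℝ) ^ (n * (n - 1) / 2) * ∏ i : Fin n, ∏ m ∈ Finset.Iio i, (y i - y m) := by
  rw [prod_pairs n (fun m i => y m - y i)]
  have : ∀ i : Fin n, ∏ m ∈ Finset.Iio i, (y m - y i) =
      (-1 : ℝ) ^ (i : ℕ) * ∏ m ∈ Finset.Iio i, (y i - y m) := by
    intro i
    rw [← Fin.card_Iio i, ← Finset.prod_const, ← Finset.prod_mul_distrib]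
    exact Finset.prod_congr rfl fun m _ => by ring
  rw [Finset.prod_congr rfl fun i _ => this i, Finset.prod_mul_distrib,
    Finset.prod_pow_eq_pow_sum]
  congr 2
  rw [Fin.sum_univ_eq_sum_range (fun k => k)]
  have := Finset.sum_range_id_mul_two n
  omega

lemma tendsto_det {n : ℕ} {α : Type*} {l : Filter α} {A : α → Matrix (Fin n) (Fin n) ℝ}
    {B : Matrix (Fin n) (Fin n) ℝ}
    (hent : ∀ i j, Tendsto (fun a => A a i j) l (nhds (B i j))) :
    Tendsto (fun a => (A a).det) l (nhds B.det) := by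
  simp only [Matrix.det_apply, Units.smul_def, zsmul_eq_mul]
  refine tendsto_finset_sum _ fun σ _ => ?_
  exact (tendsto_finset_prod _ fun i _ => hent (σ i) i).const_mul _

lemma dd_entry_tendsto {n : ℕ} (f : ℝ → ℝ) (hf : ContDiff ℝ (⊤ : ℕ∞) f) (x : ℝ) (i : Fin n) :
    Tendsto (fun y : Fin n → ℝ => dd f ((Finset.Iic i).image y))
      (nhdsWithin (fun _ => x) {y : Fin n → ℝ | Function.Injective y})
      (nhds (iteratedDeriv (i : ℕ) f x / ((i : ℕ).factorial : ℝ))) := by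
  rw [Metric.tendsto_nhdsWithin_nhds]
  intro ε hε
  have hc : ContinuousAt (iteratedDeriv (i : ℕ) f) x :=
    (hf.continuous_iteratedDeriv _ (by exact_mod_cast le_top)).continuousAt
  rw [Metric.continuousAt_iff] at hc
  obtain ⟨δ, hδ, hδ2⟩ := hc ε hε
  refine ⟨δ / 2, by linarith, fun y hy hyd => ?_⟩
  have hyinj : Function.Injective y := hy
  set t := (Finset.Iic i).image y with ht
  have htc : t.card = (i : ℕ) + 1 := by
    rw [ht, Finset.card_image_of_injective _ hyinj, Fin.card_Iic]
  have hne : t.Nonempty := Finset.card_pos.mp (by omega)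
  have hball : ∀ a ∈ t, dist a x < δ / 2 := by
    intro a ha
    rw [ht, Finset.mem_image] at ha
    obtain ⟨l, -, rfl⟩ := ha
    calc dist (y l) x = dist (y l) ((fun _ => x) l) := rfl
    _ ≤ dist y (fun _ => x) := dist_le_pi_dist y (fun _ => x) l
    _ < δ / 2 := hyd
  obtain ⟨ξ, hξmem, hξ⟩ := dd_mvt f hf t (i : ℕ) htc hne
  have hξx : dist ξ x < δ := by
    have h1 := hball _ (t.min'_mem hne)
    have h2 := hball _ (t.max'_mem hne)
    rw [Real.dist_eq, abs_lt] at h1 h2 ⊢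
    constructor
    · linarith [hξmem.1]
    · linarith [hξmem.2]
  have := hδ2 hξx
  rw [hξ, Real.dist_eq, div_sub_div_same, abs_div, abs_of_pos
    (by exact_mod_cast (i : ℕ).factorial_pos : (0:ℝ) < ((i:ℕ).factorial : ℝ))]
  rw [Real.dist_eq] at this
  have hfac : (1 : ℝ) ≤ ((i : ℕ).factorial : ℝ) := by
    exact_mod_cast Nat.one_le_iff_ne_zero.mpr (i:ℕ).factorial_ne_zero
  calc |iteratedDeriv (i:ℕ) f ξ - iteratedDeriv (i:ℕ) f x| / ((i:ℕ).factorial : ℝ)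
      ≤ |iteratedDeriv (i:ℕ) f ξ - iteratedDeriv (i:ℕ) f x| := by
        apply div_le_self (abs_nonneg _) hfac
    _ < ε := this

/-- The limit of a generalized alternant divided by the Vandermonde determinant,
as all points tend to `x`, equals `(-1)^(n(n-1)/2) / (1!⋯(n-1)!)` times the Wronskian. -/
theorem stmt0 (n : ℕ) (hn : 2 ≤ n) (h : Fin n → ℝ → ℝ)
    (hh : ∀ j, ContDiff ℝ (⊤ : ℕ∞) (h j)) (x : ℝ) :
    Tendsto
      (fun y : Fin n → ℝ =>
        (Matrix.det (Matrix.of fun i j : Fin n => h j (y i))) /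
          ∏ p ∈ Finset.univ.filter (fun p : Fin n × Fin n => p.1 < p.2), (y p.1 - y p.2))
      (nhdsWithin (fun _ => x) {y : Fin n → ℝ | Function.Injective y})
      (nhds (((-1 : ℝ) ^ (n * (n - 1) / 2) / ∏ k ∈ Finset.range n, (Nat.factorial k : ℝ)) *
        Matrix.det (Matrix.of fun i j : Fin n => iteratedDeriv (i : ℕ) (h j) x))) := by
  classical
  have hh' : ∀ j, ContDiff ℝ (⊤ : ℕ∞) (h j) := fun j => (hh j).of_le (mod_cast le_top)
  set N := n * (n - 1) / 2 with hN
  set DD := fun y : Fin n → ℝ =>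
    Matrix.of fun i j : Fin n => dd (h j) ((Finset.Iic i).image y) with hDD
  have hG : Tendsto (fun y : Fin n → ℝ => ((-1:ℝ)^N) * (DD y).det)
      (nhdsWithin (fun _ => x) {y : Fin n → ℝ | Function.Injective y})
      (nhds (((-1 : ℝ) ^ N / ∏ k ∈ Finset.range n, (Nat.factorial k : ℝ)) *
        Matrix.det (Matrix.of fun i j : Fin n => iteratedDeriv (i : ℕ) (h j) x))) := by
    have hdet : Tendsto (fun y : Fin n → ℝ => (DD y).det)
        (nhdsWithin (fun _ => x) {y : Fin n → ℝ | Function.Injective y})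
        (nhds (Matrix.det (Matrix.of fun i j : Fin n =>
          iteratedDeriv (i : ℕ) (h j) x / (((i : ℕ).factorial : ℝ))))) :=
      tendsto_det (fun i j => dd_entry_tendsto (h j) (hh' j) x i)
    have h2 := hdet.const_mul ((-1:ℝ)^N)
    have h3 : Matrix.det (Matrix.of fun i j : Fin n =>
        iteratedDeriv (i : ℕ) (h j) x / (((i : ℕ).factorial : ℝ))) =
        (∏ k ∈ Finset.range n, (Nat.factorial k : ℝ))⁻¹ *
          Matrix.det (Matrix.of fun i j : Fin n => iteratedDeriv (i : ℕ) (h j) x) := by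
      have : (Matrix.of fun i j : Fin n =>
          iteratedDeriv (i : ℕ) (h j) x / (((i : ℕ).factorial : ℝ))) =
          Matrix.of fun i j : Fin n => (((i : ℕ).factorial : ℝ))⁻¹ *
            (Matrix.of fun i j : Fin n => iteratedDeriv (i : ℕ) (h j) x) i j := by
        ext i j; simp [div_eq_inv_mul]
      rw [this, Matrix.det_mul_column, ← Finset.prod_inv_distrib]
      congr 1
      rw [← Fin.prod_univ_eq_prod_range (fun k => ((Nat.factorial k : ℝ))⁻¹) n]
    rw [h3] at h2
    convert h2 using 2
    field_simp
  refine Tendsto.congr' ?_ hG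
  filter_upwards [self_mem_nhdsWithin] with y hy
  have hyinj : Function.Injective y := hy
  have hP : (∏ i : Fin n, ∏ m ∈ Finset.Iio i, (y i - y m)) ≠ 0 := by
    refine Finset.prod_ne_zero_iff.mpr fun i _ => Finset.prod_ne_zero_iff.mpr fun m hm => ?_
    exact sub_ne_zero.mpr fun hc => (ne_of_lt (Finset.mem_Iio.mp hm)) (hyinj hc.symm)
  rw [det_alternant n h y hyinj, prod_pairs_sign n y, ← hN]
  have hQ : (-1:ℝ)^N * (∏ i : Fin n, ∏ m ∈ Finset.Iio i, (y i - y m)) ≠ 0 :=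
    mul_ne_zero (pow_ne_zero _ (by norm_num)) hP
  rw [eq_div_iff hQ]
  have h2 : (-1:ℝ)^N * (-1:ℝ)^N = 1 := by
    rw [← pow_add]; exact Even.neg_one_pow ⟨N, rfl⟩
  linear_combination (Matrix.det (DD y)) *
    (∏ i : Fin n, ∏ m ∈ Finset.Iio i, (y i - y m)) * h2
end

section
/- For integers f_1 ≥ f_2 ≥ ⋯ ≥ f_n ≥ 0, the limit as x_1,...,x_n → x (with x ≠ 0) of the generalized Vandermonde determinant M_{f_1,...,f_n}(x_1,...,x_n) = det(x_j^{f_i + n - i})_{i,j=1}^n divided by the ordinary Vandermonde D(x_1,...,x_n) equals x^{f_1+⋯+f_n} · D(f_1+n-1, f_2+n-2, …, f_n) / D(n-1, n-2, …, 1, 0), where D applied to a tuple of numbers denotes the product of pairwise differences (earlier minus later). -/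
/-!
The alternant `det (y j ^ e i)` vanishes as soon as two coordinates of `y` coincide, so every
`X i - X j` divides it as a polynomial; these are pairwise non-associated irreducibles, hence the
Vandermonde product divides it. On points with distinct coordinates the quotient is therefore a
polynomial, and its limit at `(x, …, x)` is the value of that polynomial there. The value is read
off along the curve `t ↦ (x * t ^ (n - 1 - j))ⱼ`, on which numerator and denominator are
projective Vandermonde determinants, and each factor `(t ^ a - t ^ b) / (t ^ c - t ^ d)` tends to
`(a - b) / (c - d)` as `t → 1`.
-/

open Filter Matrix Finset MvPolynomial Topology

namespace MvPolynomial

variable {σ R : Type*} [CommRing R]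

theorem dvd_aeval_sub_self {d : MvPolynomial σ R} {g : σ → MvPolynomial σ R}
    (hg : ∀ k, d ∣ g k - X k) (p : MvPolynomial σ R) : d ∣ aeval g p - p := by
  have hmk : (Ideal.Quotient.mkₐ R (Ideal.span {d})).comp (aeval g) =
      Ideal.Quotient.mkₐ R (Ideal.span {d}) :=
    algHom_ext fun k => by
      simpa [Ideal.Quotient.mkₐ_eq_mk, Ideal.Quotient.eq, Ideal.mem_span_singleton] using hg k
  simpa [Ideal.Quotient.mkₐ_eq_mk, Ideal.Quotient.eq, Ideal.mem_span_singleton] using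
    congr($hmk p)

theorem X_sub_X_dvd_of_aeval_update_eq_zero [DecidableEq σ] {i j : σ} {p : MvPolynomial σ R}
    (hp : aeval (Function.update (X (R := R)) i (X j)) p = 0) : X i - X j ∣ p := by
  have hsubst : ∀ k, X i - X j ∣ Function.update (X (R := R)) i (X j) k - X k := fun k => by
    rcases eq_or_ne k i with rfl | hk
    · exact ⟨-1, by simp⟩
    · simp [Function.update_of_ne hk]
  have h := dvd_aeval_sub_self hsubst p
  rwa [hp, zero_sub, dvd_neg] at h

theorem irreducible_X_sub_X [IsDomain R] {i j : σ} (hij : i ≠ j) :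
    Irreducible (X i - X j : MvPolynomial σ R) := by
  classical
  have hcoeff : coeff (Finsupp.single i 1) (X i - X j : MvPolynomial σ R) = 1 := by
    simp [coeff_X, Finsupp.single_eq_single_iff, hij.symm]
  refine irreducible_of_totalDegree_eq_one (le_antisymm ?_ ?_) fun r hr => ?_
  · exact (totalDegree_sub _ _).trans (by simp)
  · simpa using le_totalDegree (s := Finsupp.single i 1) (by simp [mem_support_iff, hcoeff])
  · exact isUnit_of_dvd_one (hcoeff ▸ hr _)

theorem not_X_sub_X_dvd_X_sub_X [Nontrivial R] {a b c d : σ} (hcd : c ≠ d)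
    (h : s(c, d) ≠ s(a, b)) : ¬ (X a - X b : MvPolynomial σ R) ∣ X c - X d := by
  classical
  rintro ⟨q, hq⟩
  have key := congr(aeval (Function.update (X (R := R)) b (X a)) $hq)
  simp only [map_sub, _root_.map_mul, aeval_X, Function.update_apply, ite_self, ↓reduceIte,
    sub_self, zero_mul, sub_eq_zero] at key
  by_cases hc : c = b <;> by_cases hd : d = b <;> simp only [hc, hd, ↓reduceIte] at key
  · exact hcd (hc.trans hd.symm)
  · exact h (by simp [hc, X_injective key])
  · exact h (by simp [hd, X_injective key])
  · exact hcd (X_injective key)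

end MvPolynomial

theorem tendsto_pow_sub_pow_div_pow_sub_pow {a b c d : ℕ} (hcd : c ≠ d) :
    Tendsto (fun t : ℝ => (t ^ a - t ^ b) / (t ^ c - t ^ d)) (𝓝[≠] 1)
      (𝓝 (((a : ℝ) - b) / ((c : ℝ) - d))) := by
  have slope_pow_sub (k l : ℕ) : Tendsto (fun t : ℝ => (t ^ k - t ^ l) / (t - 1)) (𝓝[≠] 1)
      (𝓝 ((k : ℝ) - l)) := by
    have hderiv := (hasDerivAt_pow k (1 : ℝ)).fun_sub (hasDerivAt_pow l (1 : ℝ))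
    simpa [hasDerivAt_iff_tendsto_slope, slope_fun_def_field] using hderiv
  have hcd' : (c : ℝ) - d ≠ 0 := sub_ne_zero.2 (by exact_mod_cast hcd)
  refine ((slope_pow_sub a b).div (slope_pow_sub c d) hcd').congr' ?_
  filter_upwards [self_mem_nhdsWithin] with t ht
  exact div_div_div_cancel_right₀ (sub_ne_zero.2 ht) _ _

section Alternant

variable {R : Type*} [CommRing R] {n : ℕ}

def vandermondeProd (v : Fin n → R) : R :=
  ∏ p ∈ univ.filter (fun p : Fin n × Fin n => p.1 < p.2), (v p.1 - v p.2)

def alternant (e : Fin n → ℕ) (v : Fin n → R) : R :=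
  det (of fun i j => v j ^ e i)

theorem vandermondeProd_eq_prod_Ioi (v : Fin n → R) :
    vandermondeProd v = ∏ i, ∏ j ∈ Ioi i, (v i - v j) := by
  rw [vandermondeProd, prod_filter, ← univ_product_univ, prod_product]
  exact prod_congr rfl fun i _ => by rw [← filter_lt_eq_Ioi, prod_filter]

theorem RingHom.map_vandermondeProd {S : Type*} [CommRing S] (φ : R →+* S) (v : Fin n → R) :
    φ (vandermondeProd v) = vandermondeProd (fun i => φ (v i)) := by
  simp [vandermondeProd]

theorem RingHom.map_alternant {S : Type*} [CommRing S] (φ : R →+* S) (e : Fin n → ℕ)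
    (v : Fin n → R) : φ (alternant e v) = alternant e (fun i => φ (v i)) := by
  rw [alternant, RingHom.map_det]
  congr 1
  ext i j
  simp

theorem vandermondeProd_ne_zero [IsDomain R] {v : Fin n → R} (hv : Function.Injective v) :
    vandermondeProd v ≠ 0 :=
  prod_ne_zero_iff.2 fun _ hp => sub_ne_zero.2 (hv.ne (mem_filter.1 hp).2.ne)

theorem alternant_const_mul (e : Fin n → ℕ) (x : R) (v : Fin n → R) :
    alternant e (fun j => x * v j) = (∏ i, x ^ e i) * alternant e v := by
  simp only [alternant, mul_pow]
  exact det_mul_column _ _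

theorem alternant_rev (v : Fin n → R) :
    alternant (fun i => n - 1 - (i : ℕ)) v = vandermondeProd v := by
  rw [vandermondeProd_eq_prod_Ioi, alternant, ← det_transpose]
  convert det_projVandermonde 1 v using 2
  · ext i j
    simp [projVandermonde_apply, Fin.val_rev, Nat.sub_sub, add_comm]
  · simp

theorem alternant_pow_rev (e : Fin n → ℕ) (t : R) :
    alternant e (fun j => t ^ (n - 1 - (j : ℕ))) = vandermondeProd (fun i => t ^ e i) := by
  rw [vandermondeProd_eq_prod_Ioi, alternant]
  convert det_projVandermonde 1 (fun i => t ^ e i) using 2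
  · ext i j
    simp [projVandermonde_apply, Fin.val_rev, Nat.sub_sub, add_comm, ← pow_mul, mul_comm]
  · simp

theorem vandermondeProd_X_dvd_alternant_X [IsDomain R] [UniqueFactorizationMonoid R]
    (e : Fin n → ℕ) :
    vandermondeProd (X : Fin n → MvPolynomial (Fin n) R) ∣ alternant e X := by
  refine prod_dvd_of_isRelPrime (fun p hp q hq hpq => ?_) fun p hp => ?_
  · have hp' := (mem_filter.1 hp).2
    have hq' := (mem_filter.1 hq).2
    refine (irreducible_X_sub_X hp'.ne).isRelPrime_iff_not_dvd.2
      (not_X_sub_X_dvd_X_sub_X hq'.ne ?_)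
    rw [Ne, Sym2.eq_iff]
    rintro (⟨h1, h2⟩ | ⟨h1, h2⟩)
    · exact hpq (Prod.ext h1 h2).symm
    · rw [h1, h2] at hq'
      exact lt_asymm hp' hq'
  · have hlt := (mem_filter.1 hp).2
    refine X_sub_X_dvd_of_aeval_update_eq_zero ?_
    rw [alternant, AlgHom.map_det]
    refine det_zero_of_column_eq hlt.ne fun k => ?_
    simp [Function.update_of_ne hlt.ne']

theorem tendsto_vandermondeProd_pow_div (a b : Fin n → ℕ) (hb : Function.Injective b) :
    Tendsto
      (fun t : ℝ => vandermondeProd (fun i => t ^ a i) / vandermondeProd (fun i => t ^ b i))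
      (𝓝[≠] 1)
      (𝓝 (vandermondeProd (fun i => (a i : ℝ)) / vandermondeProd (fun i => (b i : ℝ)))) := by
  simp only [vandermondeProd, ← prod_div_distrib]
  exact tendsto_finsetProd _ fun p hp =>
    tendsto_pow_sub_pow_div_pow_sub_pow (hb.ne (mem_filter.1 hp).2.ne)

theorem exists_tendsto_alternant_div_vandermondeProd (e : Fin n → ℕ)
    (y₀ : Fin n → ℝ) :
    ∃ ℓ, Tendsto (fun y => alternant e y / vandermondeProd y)
      (𝓝[{y | Function.Injective y}] y₀) (𝓝 ℓ) := by
  obtain ⟨Q, hQ⟩ := vandermondeProd_X_dvd_alternant_X (R := ℝ) e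
  refine ⟨eval y₀ Q,
    (((continuous_eval Q).tendsto y₀).mono_left nhdsWithin_le_nhds).congr' ?_⟩
  filter_upwards [self_mem_nhdsWithin] with y hy
  have hQy := congr(eval y $hQ)
  rw [RingHom.map_alternant, RingHom.map_mul, RingHom.map_vandermondeProd] at hQy
  simp only [eval_X] at hQy
  rw [eq_div_iff (vandermondeProd_ne_zero hy), hQy, mul_comm]

theorem tendsto_alternant_div_vandermondeProd (e : Fin n → ℕ) {x : ℝ} (hx : x ≠ 0) :
    Tendsto (fun y => alternant e y / vandermondeProd y)
      (𝓝[{y | Function.Injective y}] fun _ => x)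
      (𝓝 ((∏ i, x ^ e i) / (∏ i : Fin n, x ^ (n - 1 - (i : ℕ))) *
        (vandermondeProd (fun i => (e i : ℝ)) /
          vandermondeProd (fun i : Fin n => ((n - 1 - (i : ℕ) : ℕ) : ℝ))))) := by
  set δ : Fin n → ℕ := fun i => n - 1 - (i : ℕ)
  have hδ : Function.Injective δ := fun i j h => Fin.ext (by simp only [δ] at h; omega)
  obtain ⟨ℓ, hℓ⟩ := exists_tendsto_alternant_div_vandermondeProd e fun _ => x
  set γ : ℝ → Fin n → ℝ := fun t j => x * t ^ δ j
  have hγ : Tendsto γ (𝓝[>] 1) (𝓝[{y | Function.Injective y}] fun _ => x) := by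
    refine tendsto_nhdsWithin_iff.2 ⟨?_, ?_⟩
    · have hcont : Continuous γ := by fun_prop
      simpa [γ] using (hcont.tendsto 1).mono_left nhdsWithin_le_nhds
    · filter_upwards [self_mem_nhdsWithin] with t ht i j hij
      exact hδ (pow_right_injective₀ (zero_lt_one.trans ht) ht.ne' (mul_left_cancel₀ hx hij))
  have hγ_val : ∀ t, alternant e (γ t) / vandermondeProd (γ t) =
      (∏ i, x ^ e i) / (∏ i, x ^ δ i) *
        (vandermondeProd (fun i => t ^ e i) / vandermondeProd (fun i => t ^ δ i)) := fun t => by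
    -- as an alternant, the denominator also lets `x` be pulled out by `alternant_const_mul`
    rw [← alternant_rev, alternant_const_mul, alternant_const_mul, alternant_pow_rev,
      alternant_pow_rev, mul_div_mul_comm]
  have hcurve := ((tendsto_vandermondeProd_pow_div e δ hδ).mono_left
    (nhdsWithin_mono _ fun t ht => ne_of_gt ht)).const_mul ((∏ i, x ^ e i) / (∏ i, x ^ δ i))
  simp only [← hγ_val] at hcurve
  rwa [tendsto_nhds_unique (hℓ.comp hγ) hcurve] at hℓ

end Alternant

theorem stmt1_general (n : ℕ) (f : Fin n → ℕ) (x : ℝ) (hx : x ≠ 0) :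
    Tendsto
      (fun y : Fin n → ℝ =>
        (Matrix.det (Matrix.of fun i j : Fin n => y j ^ (f i + (n - 1 - (i : ℕ))))) /
          ∏ p ∈ Finset.univ.filter (fun p : Fin n × Fin n => p.1 < p.2), (y p.1 - y p.2))
      (nhdsWithin (fun _ => x) {y : Fin n → ℝ | Function.Injective y})
      (nhds (x ^ (∑ i, f i) *
        (∏ p ∈ Finset.univ.filter (fun p : Fin n × Fin n => p.1 < p.2),
          (((f p.1 + (n - 1 - (p.1 : ℕ)) : ℕ) : ℝ) - ((f p.2 + (n - 1 - (p.2 : ℕ)) : ℕ) : ℝ))) /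
        (∏ p ∈ Finset.univ.filter (fun p : Fin n × Fin n => p.1 < p.2),
          (((n - 1 - (p.1 : ℕ) : ℕ) : ℝ) - ((n - 1 - (p.2 : ℕ) : ℕ) : ℝ))))) := by
  have h := tendsto_alternant_div_vandermondeProd (fun i => f i + (n - 1 - (i : ℕ))) hx
  have hpow : (∏ i, x ^ (f i + (n - 1 - (i : ℕ)))) / (∏ i : Fin n, x ^ (n - 1 - (i : ℕ))) =
      x ^ (∑ i, f i) := by
    rw [prod_congr rfl fun i _ => pow_add x _ _, prod_mul_distrib,
      mul_div_cancel_right₀ _ (prod_ne_zero_iff.2 fun i _ => pow_ne_zero _ hx),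
      prod_pow_eq_pow_sum]
  rwa [hpow, ← mul_div_assoc] at h

/-- The limit of the generalized Vandermonde determinant `M_{f₁,…,fₙ}` divided by the
ordinary Vandermonde, as all points tend to `x ≠ 0`, equals
`x^(f₁+⋯+fₙ) · D(f₁+n-1,…,fₙ) / D(n-1,…,0)`. -/
theorem stmt1 (n : ℕ) (hn : 2 ≤ n) (f : Fin n → ℕ) (hf : Antitone f) (x : ℝ) (hx : x ≠ 0) :
    Tendsto
      (fun y : Fin n → ℝ =>
        (Matrix.det (Matrix.of fun i j : Fin n => y j ^ (f i + (n - 1 - (i : ℕ))))) /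
          ∏ p ∈ Finset.univ.filter (fun p : Fin n × Fin n => p.1 < p.2), (y p.1 - y p.2))
      (nhdsWithin (fun _ => x) {y : Fin n → ℝ | Function.Injective y})
      (nhds (x ^ (∑ i, f i) *
        (∏ p ∈ Finset.univ.filter (fun p : Fin n × Fin n => p.1 < p.2),
          (((f p.1 + (n - 1 - (p.1 : ℕ)) : ℕ) : ℝ) - ((f p.2 + (n - 1 - (p.2 : ℕ)) : ℕ) : ℝ))) /
        (∏ p ∈ Finset.univ.filter (fun p : Fin n × Fin n => p.1 < p.2),
          (((n - 1 - (p.1 : ℕ) : ℕ) : ℝ) - ((n - 1 - (p.2 : ℕ) : ℕ) : ℝ))))) :=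
  stmt1_general n f x hx
end
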